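/- Let p ∈ ℂ[z,z⁻¹] be a non-zero Laurent polynomial in one variable with wd(p) ≥ 1. Then for all λ ≥ 0 one has μ_{S¹}({z ∈ S¹ : |p(z)| ≤ λ}) ≤ (8·√3/√47) · wd(p) · ( λ / |lead(p)| )^{1/wd(p)}. -/

import Mathlib

open MeasureTheory Real Filter

noncomputable section

/-- `Laur d` is the Laurent polynomial ring `ℂ[ℤ^d] = ℂ[z₁^{±1},…,z_d^{±1}]`,
realized as the group algebra of `ℤ^d` over `ℂ`. -/
abbrev Laur (d : ℕ) : Type := AddMonoidAlgebra ℂ (Fin d → ℤ)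

/-- the coefficient of `z₁^{n₁}⋯z_d^{n_d}` in `p` -/
def coeff {d : ℕ} (p : Laur d) (n : Fin d → ℤ) : ℂ := (AddMonoidAlgebra.coeff p : (Fin d → ℤ) →₀ ℂ) n

/-- the top degree `n⁺` of `p` in the last variable `z_{d}` -/
def topDeg {d : ℕ} (p : Laur (d+1)) : ℤ :=
  sSup ((fun n : Fin (d+1) → ℤ => n (Fin.last d)) ''
    ((Finsupp.support (AddMonoidAlgebra.coeff p) : Finset (Fin (d+1) → ℤ)) : Set (Fin (d+1) → ℤ)))

/-- the bottom degree `n⁻` of `p` in the last variable `z_{d}` -/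
def botDeg {d : ℕ} (p : Laur (d+1)) : ℤ :=
  sInf ((fun n : Fin (d+1) → ℤ => n (Fin.last d)) ''
    ((Finsupp.support (AddMonoidAlgebra.coeff p) : Finset (Fin (d+1) → ℤ)) : Set (Fin (d+1) → ℤ)))

/-- the coefficient `q⁺(p) = q_{n⁺}` of the top power of the last variable:
a Laurent polynomial in one variable fewer -/
def qplus {d : ℕ} (p : Laur (d+1)) : Laur d :=
  AddMonoidAlgebra.ofCoeff (Finsupp.comapDomain (fun n : Fin d → ℤ => Fin.snoc n (topDeg p)) (AddMonoidAlgebra.coeff p)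
    (fun a _ b _ h => funext fun i => by simpa using congrFun h (Fin.castSucc i)))

/-- the leading coefficient `lead(p) = p_d`, obtained by iterating `q⁺` -/
def lead : {d : ℕ} → Laur d → ℂ
  | 0, p => coeff p 0
  | _+1, p => lead (qplus p)

/-- the width `wd(p) = max{w₀(p),…,w_{d-1}(p)}` where `w_i(p) = w(p_i)` and
`p_i = q⁺(p_{i-1})` -/
def wd : {d : ℕ} → Laur d → ℤ
  | 0, _ => 0
  | _+1, p => max (topDeg p - botDeg p) (wd (qplus p))

/-- evaluation of a Laurent polynomial at a point of `(ℂ^×)^d` -/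
def evalL {d : ℕ} (p : Laur d) (z : Fin d → ℂ) : ℂ :=
  Finsupp.sum (AddMonoidAlgebra.coeff p) fun n a => a * ∏ i, z i ^ n i

/-- the normalized Haar measure on the unit circle `S¹ ⊆ ℂ`, as a measure on `ℂ` -/
def circleMeasure : Measure ℂ :=
  Measure.map (fun x : ℝ => Complex.exp (2 * Real.pi * Complex.I * x))
    (volume.restrict (Set.Ioc (0:ℝ) 1))

instance : IsProbabilityMeasure circleMeasure := by
  have h1 : IsProbabilityMeasure (volume.restrict (Set.Ioc (0:ℝ) 1)) := by
    constructor
    simp [Real.volume_Ioc]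
  exact Measure.isProbabilityMeasure_map
    ((Complex.continuous_exp.comp (continuous_const.mul Complex.continuous_ofReal)).aemeasurable)

/-- the normalized Haar measure on the `d`-torus `T^d`, as a measure on `ℂ^d` -/
def torusMeasure (d : ℕ) : Measure (Fin d → ℂ) := Measure.pi fun _ => circleMeasure

/-- entrywise evaluation of a matrix over `ℂ[ℤ^d]` at a point of the torus -/
def evalMatrix {d m n : ℕ} (A : Matrix (Fin m) (Fin n) (Laur d)) (z : Fin d → ℂ) :
    Matrix (Fin m) (Fin n) ℂ := fun i j => evalL (A i j) z

/-- the spectral density function of `r_A^{(2)} : L²(ℤ^d)^m → L²(ℤ^d)^n`: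
`F_A(λ) = ∫_{T^d} #{i : μ_i(z) ≤ λ²} dμ_{T^d}(z)` where `μ₁(z),…,μ_m(z)` are the
eigenvalues of the positive semidefinite Hermitian matrix `A(z)·A(z)^*` -/
def sdf {d m n : ℕ} (A : Matrix (Fin m) (Fin n) (Laur d)) (lam : ℝ) : ℝ :=
  ∫ z, ((Finset.univ.filter fun i : Fin m =>
      (Matrix.isHermitian_mul_conjTranspose_self (evalMatrix A z)).eigenvalues i ≤ lam ^ 2).card : ℝ)
    ∂ torusMeasure d

/-- the `L¹`-norm `‖p‖₁` of a Laurent polynomial -/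
def norm1 {d : ℕ} (p : Laur d) : ℝ := Finsupp.sum (AddMonoidAlgebra.coeff p) fun _ a => ‖a‖

/-- the `L¹`-norm `‖A‖₁` of a matrix over `ℂ[ℤ^d]`: the maximum of the `L¹`-norms
of its entries -/
def norm1M {d m n : ℕ} (A : Matrix (Fin m) (Fin n) (Laur d)) : ℝ := ⨆ i, ⨆ j, norm1 (A i j)

/-!
On the unit circle `|p(z)| = |lead p| · ∏ᵣ |z - r|`, the product running over the `wd(p)` roots
of the polynomial `z^{-n⁻} p`. So `|p(z)| ≤ λ` forces `|z - r| ≤ t := (λ / |lead p|)^{1/wd(p)}` for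
some root `r`. A point of the circle within distance `t` of `r` is within distance `2t` of
`r / |r|`, hence, by Jordan's inequality `|sin(πy)| ≥ 2|y|` for `|y| ≤ 1/2`, within normalized arc
distance `t / 2` of it, and such points have measure at most `t`. Summing over the roots gives the
bound `wd(p) · t`, and `8√3/√47 ≥ 1`.
-/

open Metric
open scoped Polynomial

theorem Polynomial.Splits.norm_eval_eq_prod_roots {K : Type*} [NormedField K] {f : K[X]}
    (hf : f.Splits) (x : K) :
    ‖f.eval x‖ = ‖f.leadingCoeff‖ * (f.roots.map fun r => ‖x - r‖).prod := by
  rw [hf.eval_eq_prod_roots, norm_mul]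
  exact congrArg _ (Multiset.prod_hom' _ (normHom : K →*₀ ℝ) _).symm

section Degrees

variable {d : ℕ} {p : Laur (d+1)} {n : Fin (d+1) → ℤ}

theorem le_topDeg (hn : n ∈ (AddMonoidAlgebra.coeff p).support) : n (Fin.last d) ≤ topDeg p :=
  le_csSup ((Finset.finite_toSet _).image _).bddAbove (Set.mem_image_of_mem _ hn)

theorem botDeg_le (hn : n ∈ (AddMonoidAlgebra.coeff p).support) : botDeg p ≤ n (Fin.last d) :=
  csInf_le ((Finset.finite_toSet _).image _).bddBelow (Set.mem_image_of_mem _ hn)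

theorem exists_mem_support_last_eq_topDeg (hp : p ≠ 0) :
    ∃ n ∈ (AddMonoidAlgebra.coeff p).support, n (Fin.last d) = topDeg p :=
  Set.Nonempty.csSup_mem
    (Set.Nonempty.image _ (Finsupp.support_nonempty_iff.2 (mt AddMonoidAlgebra.coeff_eq_zero.1 hp)))
    ((Finset.finite_toSet _).image _)

end Degrees

section OneVariable

theorem eq_const_of_fin_one {α : Type*} (n : Fin 1 → α) : n = fun _ => n 0 :=
  funext fun i => by rw [Subsingleton.elim i 0]

variable (p : Laur 1)

theorem lead_eq_coeff_topDeg : lead p = coeff p (fun _ => topDeg p) := by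
  show coeff p (Fin.snoc (0 : Fin 0 → ℤ) (topDeg p)) = _
  rw [eq_const_of_fin_one (Fin.snoc _ _)]
  rfl

theorem wd_eq_toNat : wd p = (topDeg p - botDeg p).toNat := by
  rw [Int.toNat_eq_max]
  rfl

/-- `z ^ (-n⁻) * p(z)`, a polynomial in `z`. -/
def toPolynomial : ℂ[X] :=
  ∑ n ∈ (AddMonoidAlgebra.coeff p).support, Polynomial.monomial (n 0 - botDeg p).toNat (coeff p n)

theorem coeff_toPolynomial (k : ℕ) :
    (toPolynomial p).coeff k = coeff p (fun _ => botDeg p + k) := by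
  classical
  simp only [toPolynomial, Polynomial.finsetSum_coeff, Polynomial.coeff_monomial]
  rw [Finset.sum_eq_single (fun _ => botDeg p + k)]
  · simp
  · intro n hn hne
    rw [if_neg]
    intro hk
    have hB : botDeg p ≤ n 0 := botDeg_le hn
    exact hne ((eq_const_of_fin_one n).trans (funext fun _ => by omega))
  · intro hn
    simp [coeff, Finsupp.notMem_support_iff.1 hn]

theorem evalL_eq_zpow_mul_eval {z : ℂ} (hz : z ≠ 0) :
    evalL p ![z] = z ^ botDeg p * (toPolynomial p).eval z := by
  rw [evalL, Finsupp.sum, toPolynomial, Polynomial.eval_finsetSum, Finset.mul_sum]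
  refine Finset.sum_congr rfl fun n hn => ?_
  have hB : botDeg p ≤ n 0 := botDeg_le hn
  rw [Polynomial.eval_monomial, Fin.prod_univ_one, ← zpow_natCast, Int.toNat_of_nonneg (by omega),
    mul_left_comm, ← zpow_add₀ hz, add_sub_cancel]
  rfl

variable {p}

theorem coeff_toPolynomial_topDeg_sub_botDeg (hp : p ≠ 0) :
    (toPolynomial p).coeff (topDeg p - botDeg p).toNat = lead p := by
  obtain ⟨n, hn, hnT⟩ := exists_mem_support_last_eq_topDeg hp
  have hB : botDeg p ≤ topDeg p := hnT ▸ botDeg_le hn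
  rw [coeff_toPolynomial, lead_eq_coeff_topDeg, Int.toNat_of_nonneg (by omega), add_sub_cancel]

theorem lead_ne_zero (hp : p ≠ 0) : lead p ≠ 0 := by
  obtain ⟨n, hn, hnT⟩ := exists_mem_support_last_eq_topDeg hp
  have hn' : n = fun _ => topDeg p := (eq_const_of_fin_one n).trans (by rw [← hnT]; rfl)
  rw [lead_eq_coeff_topDeg, ← hn']
  exact Finsupp.mem_support_iff.1 hn

theorem natDegree_toPolynomial (hp : p ≠ 0) :
    (toPolynomial p).natDegree = (topDeg p - botDeg p).toNat := by
  refine Polynomial.natDegree_eq_of_le_of_coeff_ne_zero ?_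
    (coeff_toPolynomial_topDeg_sub_botDeg hp ▸ lead_ne_zero hp)
  refine Polynomial.natDegree_le_iff_coeff_eq_zero.2 fun k hk => ?_
  rw [coeff_toPolynomial]
  by_contra hne
  have hT := le_topDeg (Finsupp.mem_support_iff.2 hne)
  change botDeg p + k ≤ topDeg p at hT
  omega

theorem leadingCoeff_toPolynomial (hp : p ≠ 0) : (toPolynomial p).leadingCoeff = lead p := by
  rw [Polynomial.leadingCoeff, natDegree_toPolynomial hp, coeff_toPolynomial_topDeg_sub_botDeg hp]

theorem card_roots_toPolynomial (hp : p ≠ 0) :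
    (Multiset.card (toPolynomial p).roots : ℤ) = wd p := by
  rw [← (IsAlgClosed.splits _).natDegree_eq_card_roots, natDegree_toPolynomial hp, wd_eq_toNat]

theorem norm_evalL_eq_prod_roots (hp : p ≠ 0) {z : ℂ} (hz : ‖z‖ = 1) :
    ‖evalL p ![z]‖ = ‖lead p‖ * ((toPolynomial p).roots.map fun r => ‖z - r‖).prod := by
  rw [evalL_eq_zpow_mul_eval p (norm_pos_iff.1 (hz ▸ one_pos)), norm_mul, norm_zpow, hz, one_zpow,
    one_mul, (IsAlgClosed.splits _).norm_eval_eq_prod_roots, leadingCoeff_toPolynomial hp]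

end OneVariable

theorem exists_mem_le_of_prod_map_le_pow {ι : Type*} {s : Multiset ι} (hs : s ≠ 0) {f : ι → ℝ}
    {t : ℝ} (ht : 0 ≤ t) (h : (s.map f).prod ≤ t ^ Multiset.card s) : ∃ i ∈ s, f i ≤ t := by
  by_contra! hlt
  refine h.not_gt ?_
  rcases ht.eq_or_lt with rfl | ht
  · rw [zero_pow (Multiset.card_pos.2 hs).ne']
    exact Multiset.prod_pos fun y hy => by
      obtain ⟨i, hi, rfl⟩ := Multiset.mem_map.1 hy
      exact hlt i hi
  · simpa using Multiset.prod_map_lt_prod_map hs (fun _ => t) f (fun _ _ => ht) hlt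

theorem four_mul_norm_le_norm_exp_sub_one (x : ℝ) :
    4 * ‖(x : UnitAddCircle)‖ ≤ ‖Complex.exp (2 * π * Complex.I * x) - 1‖ := by
  set y := x - round x
  have hy : |π * y| ≤ π / 2 := by
    rw [abs_mul, abs_of_pos pi_pos]
    nlinarith [abs_sub_round x, pi_pos]
  have hexp : Complex.exp (2 * π * Complex.I * x) = Complex.exp (Complex.I * ↑(2 * π * y)) := by
    rw [show x = y + round x by ring]
    push_cast
    rw [mul_add, Complex.exp_add, mul_comm _ ((round x : ℤ) : ℂ), Complex.exp_int_mul_two_pi_mul_I,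
      mul_one]
    congr 1
    ring
  rw [UnitAddCircle.norm_eq, hexp, Complex.norm_exp_I_mul_ofReal_sub_one, norm_mul,
    Real.norm_eq_abs, Real.norm_eq_abs, abs_two, show 2 * π * y / 2 = π * y by ring]
  have := mul_abs_le_abs_sin hy
  rw [abs_mul, abs_of_pos pi_pos] at this
  field_simp at this
  linarith

theorem norm_sub_exp_arg_mul_I_le (r : ℂ) {w : ℂ} (hw : ‖w‖ = 1) :
    ‖w - Complex.exp (r.arg * Complex.I)‖ ≤ 2 * ‖w - r‖ := by
  have hr : ‖r - Complex.exp (r.arg * Complex.I)‖ ≤ ‖w - r‖ := by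
    have hru : r - Complex.exp (r.arg * Complex.I) =
        ((‖r‖ - 1 : ℝ) : ℂ) * Complex.exp (r.arg * Complex.I) := by
      push_cast
      linear_combination -Complex.norm_mul_exp_arg_mul_I r
    rw [hru, norm_mul, Complex.norm_exp_ofReal_mul_I, mul_one, Complex.norm_real, Real.norm_eq_abs,
      ← hw, norm_sub_rev w]
    exact abs_norm_sub_norm_le r w
  calc ‖w - Complex.exp (r.arg * Complex.I)‖
      ≤ ‖w - r‖ + ‖r - Complex.exp (r.arg * Complex.I)‖ := norm_sub_le_norm_sub_add_norm_sub _ _ _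
    _ ≤ 2 * ‖w - r‖ := by linarith

theorem dist_arg_le_of_norm_exp_sub_le {r : ℂ} {t x : ℝ}
    (hx : ‖Complex.exp (2 * π * Complex.I * x) - r‖ ≤ t) :
    dist (x : UnitAddCircle) ↑(r.arg / (2 * π)) ≤ t / 2 := by
  set β := r.arg / (2 * π)
  have hβ : Complex.exp (2 * π * Complex.I * β) = Complex.exp (r.arg * Complex.I) := by
    congr 1
    simp only [β]
    push_cast
    field_simp
  have hfac : Complex.exp (2 * π * Complex.I * x) - Complex.exp (r.arg * Complex.I) =
      Complex.exp (r.arg * Complex.I) * (Complex.exp (2 * π * Complex.I * ↑(x - β)) - 1) := by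
    rw [← hβ, mul_sub, mul_one, ← Complex.exp_add]
    congr 2
    push_cast
    ring
  have hw : ‖Complex.exp (2 * π * Complex.I * x)‖ = 1 := by
    rw [show 2 * π * Complex.I * x = ↑(2 * π * x) * Complex.I by push_cast; ring,
      Complex.norm_exp_ofReal_mul_I]
  have := norm_sub_exp_arg_mul_I_le r hw
  rw [hfac, norm_mul, Complex.norm_exp_ofReal_mul_I, one_mul] at this
  rw [dist_eq_norm, ← AddCircle.coe_sub]
  linarith [four_mul_norm_le_norm_exp_sub_one (x - β)]

theorem circleMeasure_closedBall_le (r : ℂ) (t : ℝ) :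
    circleMeasure (closedBall r t) ≤ ENNReal.ofReal t := by
  have he : Measurable fun x : ℝ => Complex.exp (2 * π * Complex.I * x) := by fun_prop
  let A : Set UnitAddCircle := closedBall ↑(r.arg / (2 * π)) (t / 2)
  calc circleMeasure (closedBall r t)
      = volume.restrict (Set.Ioc 0 (0 + 1))
          ((fun x : ℝ => Complex.exp (2 * π * Complex.I * x)) ⁻¹' closedBall r t) := by
        rw [circleMeasure, Measure.map_apply he measurableSet_closedBall, zero_add]
    _ ≤ volume.restrict (Set.Ioc 0 (0 + 1)) (((↑) : ℝ → UnitAddCircle) ⁻¹' A) :=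
        measure_mono fun x hx => dist_arg_le_of_norm_exp_sub_le (by rwa [← dist_eq_norm])
    _ = ENNReal.ofReal (min 1 (2 * (t / 2))) := by
        rw [(UnitAddCircle.measurePreserving_mk 0).measure_preimage
          measurableSet_closedBall.nullMeasurableSet, AddCircle.volume_closedBall]
    _ ≤ ENNReal.ofReal t := ENNReal.ofReal_le_ofReal (by linarith [min_le_right 1 (2 * (t / 2))])

theorem circleMeasure_biUnion_closedBall_le (s : Finset ℂ) (t : ℝ) :
    circleMeasure (⋃ r ∈ s, closedBall r t) ≤ s.card * ENNReal.ofReal t :=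
  calc circleMeasure (⋃ r ∈ s, closedBall r t)
      ≤ ∑ r ∈ s, circleMeasure (closedBall r t) := measure_biUnion_finset_le _ _
    _ ≤ ∑ _r ∈ s, ENNReal.ofReal t := Finset.sum_le_sum fun r _ => circleMeasure_closedBall_le r t
    _ = s.card * ENNReal.ofReal t := by rw [Finset.sum_const, nsmul_eq_mul]

theorem sublevel_subset_biUnion_closedBall {p : Laur 1} (hp : p ≠ 0) (hwd : 1 ≤ wd p) {lam : ℝ}
    (hlam : 0 ≤ lam) :
    {z : ℂ | ‖z‖ = 1 ∧ ‖evalL p ![z]‖ ≤ lam} ⊆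
      ⋃ r ∈ (toPolynomial p).roots.toFinset, closedBall r ((lam / ‖lead p‖) ^ (wd p : ℝ)⁻¹) := by
  rintro z ⟨hz, hle⟩
  set R := (toPolynomial p).roots
  have hlead : 0 < ‖lead p‖ := norm_pos_iff.2 (lead_ne_zero hp)
  have hcard : ((Multiset.card R : ℕ) : ℝ) = wd p := by exact_mod_cast card_roots_toPolynomial hp
  have hR : R ≠ 0 := by
    rintro hR
    rw [hR, Multiset.card_zero, Nat.cast_zero] at hcard
    have : (1 : ℝ) ≤ wd p := by exact_mod_cast hwd
    linarith
  have hprod :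
      (R.map fun r => ‖z - r‖).prod ≤ ((lam / ‖lead p‖) ^ (wd p : ℝ)⁻¹) ^ Multiset.card R := by
    rw [← hcard, Real.rpow_inv_natCast_pow (div_nonneg hlam hlead.le)
      (Multiset.card_pos.2 hR).ne', le_div_iff₀' hlead, ← norm_evalL_eq_prod_roots hp hz]
    exact hle
  obtain ⟨r, hr, hzr⟩ := exists_mem_le_of_prod_map_le_pow hR
    (rpow_nonneg (div_nonneg hlam hlead.le) _) hprod
  exact Set.mem_biUnion (Multiset.mem_toFinset.2 hr) (by rwa [mem_closedBall, dist_eq_norm])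

theorem one_le_eight_mul_sqrt_three_div_sqrt_forty_seven : 1 ≤ 8 * √3 / √47 := by
  rw [one_le_div (by positivity)]
  nlinarith [sq_sqrt (show (0 : ℝ) ≤ 3 by norm_num), sq_sqrt (show (0 : ℝ) ≤ 47 by norm_num),
    sqrt_nonneg 3, sqrt_nonneg 47]

/-- One-variable case: for a nonzero `p ∈ ℂ[z,z⁻¹]` with `wd(p) ≥ 1` and `λ ≥ 0`,
`μ_{S¹}({z ∈ S¹ : |p(z)| ≤ λ}) ≤ (8√3/√47)·wd(p)·(λ/|lead(p)|)^{1/wd(p)}`. -/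
theorem measure_sublevel_one_variable (p : Laur 1) (hp : p ≠ 0) (hwd : 1 ≤ wd p)
    (lam : ℝ) (hlam : 0 ≤ lam) :
    circleMeasure {z : ℂ | ‖z‖ = 1 ∧ ‖evalL p ![z]‖ ≤ lam} ≤
      ENNReal.ofReal (8 * Real.sqrt 3 / Real.sqrt 47 * (wd p : ℝ) *
        ((lam / ‖lead p‖) ^ ((wd p : ℝ)⁻¹))) := by
  set t := (lam / ‖lead p‖) ^ (wd p : ℝ)⁻¹
  have hcard : ((Multiset.card (toPolynomial p).roots : ℕ) : ℝ) = wd p := by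
    exact_mod_cast card_roots_toPolynomial hp
  calc circleMeasure {z : ℂ | ‖z‖ = 1 ∧ ‖evalL p ![z]‖ ≤ lam}
      ≤ circleMeasure (⋃ r ∈ (toPolynomial p).roots.toFinset, closedBall r t) :=
        measure_mono (sublevel_subset_biUnion_closedBall hp hwd hlam)
    _ ≤ (toPolynomial p).roots.toFinset.card * ENNReal.ofReal t :=
        circleMeasure_biUnion_closedBall_le _ t
    _ ≤ Multiset.card (toPolynomial p).roots * ENNReal.ofReal t := by
        gcongr
        exact Multiset.toFinset_card_le _
    _ = ENNReal.ofReal (wd p * t) := by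
        rw [← hcard, ENNReal.ofReal_mul (Nat.cast_nonneg _), ENNReal.ofReal_natCast]
    _ ≤ ENNReal.ofReal (8 * √3 / √47 * wd p * t) := by
        gcongr
        refine le_mul_of_one_le_left ?_ one_le_eight_mul_sqrt_three_div_sqrt_forty_seven
        exact_mod_cast (zero_le_one.trans hwd)
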